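/- arXiv:1409.3878 — 5 statements merged into one kernel-verified Lean document; each statement's English description precedes it below -/
import Mathlib

section
/- One-shot Jarzynski equality for extraction: if Crooks' Theorem holds and w^δ is defined by ∫_{w^δ}^{∞} P_rev(-W) dW = 1 - δ, then the truncated characteristic function satisfies χ^δ_fwd(β) := ∫_{w^δ}^{∞} P_fwd(W) exp(-βW) dW = (1 - δ) exp(-β ΔF). -/
open MeasureTheory Real

theorem one_shot_jarzynski_extraction
    (β ΔF δ : ℝ) (hβ : 0 < β) (hδ : δ ∈ Set.Icc (0:ℝ) 1)
    (Pfwd Prev : ℝ → ℝ)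
    (hPf_nonneg : ∀ W, 0 ≤ Pfwd W) (hPr_nonneg : ∀ W, 0 ≤ Prev W)
    (hPf_norm : ∫ W, Pfwd W = 1) (hPr_norm : ∫ W, Prev W = 1)
    (hCrooks : ∀ W, Pfwd W = Prev (-W) * Real.exp (β * (W - ΔF)))
    (wδ : ℝ)
    (hwδ : ∫ W in Set.Ici wδ, Prev (-W) = 1 - δ)
    (hint : IntegrableOn (fun W => Pfwd W * Real.exp (-β * W)) (Set.Ici wδ))
    (hint' : IntegrableOn (fun W => Prev (-W)) (Set.Ici wδ)) :
    ∫ W in Set.Ici wδ, Pfwd W * Real.exp (-β * W)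
      = (1 - δ) * Real.exp (-β * ΔF) := by
  have key : ∀ W, Pfwd W * Real.exp (-β * W) = Prev (-W) * Real.exp (-β * ΔF) := by
    intro W
    rw [hCrooks W, mul_assoc, ← Real.exp_add]
    ring_nf
  simp_rw [key]
  rw [integral_mul_const, hwδ]
end

section
/- One-shot Jarzynski equality for investment: if Crooks' Theorem holds and W^ε is defined by ∫_{-∞}^{W^ε} P_fwd(W) dW = 1 - ε, then χ^ε_rev(β) := ∫_{-W^ε}^{∞} P_rev(W) exp(-βW) dW = (1 - ε) exp(β ΔF). -/
open MeasureTheory Real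

theorem one_shot_jarzynski_investment
    (β ΔF ε : ℝ) (hβ : 0 < β) (hε : ε ∈ Set.Icc (0:ℝ) 1)
    (Pfwd Prev : ℝ → ℝ)
    (hPf_nonneg : ∀ W, 0 ≤ Pfwd W) (hPr_nonneg : ∀ W, 0 ≤ Prev W)
    (hPf_norm : ∫ W, Pfwd W = 1) (hPr_norm : ∫ W, Prev W = 1)
    (hCrooks : ∀ W, Pfwd W = Prev (-W) * Real.exp (β * (W - ΔF)))
    (Wε : ℝ)
    (hWε : ∫ W in Set.Iic Wε, Pfwd W = 1 - ε)
    (hint : IntegrableOn (fun W => Prev W * Real.exp (-β * W)) (Set.Ici (-Wε)))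
    (hint' : IntegrableOn Pfwd (Set.Iic Wε)) :
    ∫ W in Set.Ici (-Wε), Prev W * Real.exp (-β * W)
      = (1 - ε) * Real.exp (β * ΔF) := by
  have key : ∀ x : ℝ, Prev (-x) * Real.exp (-β * -x) = Pfwd x * Real.exp (β * ΔF) := by
    intro x
    rw [hCrooks x, mul_assoc, ← Real.exp_add]
    ring_nf
  calc ∫ W in Set.Ici (-Wε), Prev W * Real.exp (-β * W)
      = ∫ W in Set.Ioi (-Wε), Prev W * Real.exp (-β * W) :=
        integral_Ici_eq_integral_Ioi
    _ = ∫ x in Set.Iic Wε, Prev (-x) * Real.exp (-β * -x) :=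
        (integral_comp_neg_Iic Wε (fun W => Prev W * Real.exp (-β * W))).symm
    _ = ∫ x in Set.Iic Wε, Pfwd x * Real.exp (β * ΔF) := by
        simp_rw [key]
    _ = (1 - ε) * Real.exp (β * ΔF) := by
        rw [integral_mul_const, hWε]
end

section
/- Upper bound on δ-extractable work: under Crooks' Theorem, if P_fwd(W) ≤ P_max for all W, then w^δ ≤ ΔF - β^{-1}[−log(P_max/β) + log(1 - δ)] for any δ ∈ [0,1). -/
open MeasureTheory Real

theorem delta_extractable_work_upper_bound
    (β ΔF δ Pmax : ℝ) (hβ : 0 < β) (hδ0 : 0 ≤ δ) (hδ1 : δ < 1) (hPmax : 0 < Pmax)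
    (Pfwd Prev : ℝ → ℝ)
    (hPf_nonneg : ∀ W, 0 ≤ Pfwd W) (hPr_nonneg : ∀ W, 0 ≤ Prev W)
    (hPf_norm : ∫ W, Pfwd W = 1) (hPr_norm : ∫ W, Prev W = 1)
    (hPf_bound : ∀ W, Pfwd W ≤ Pmax)
    (hCrooks : ∀ W, Pfwd W = Prev (-W) * Real.exp (β * (W - ΔF)))
    (wδ : ℝ)
    (hwδ : ∫ W in Set.Ici wδ, Prev (-W) = 1 - δ)
    (hint : IntegrableOn (fun W => Pfwd W * Real.exp (-β * W)) (Set.Ici wδ))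
    (hint' : IntegrableOn (fun W => Prev (-W)) (Set.Ici wδ)) :
    wδ ≤ ΔF - (1 / β) * (-Real.log (Pmax / β) + Real.log (1 - δ)) := by
  have hrev : ∀ W, Prev (-W) = Pfwd W * Real.exp (-β * W) * Real.exp (β * ΔF) := by
    intro W
    rw [hCrooks W, mul_assoc, mul_assoc, ← Real.exp_add, ← Real.exp_add,
      show β * (W - ΔF) + (-β * W + β * ΔF) = 0 by ring, Real.exp_zero, mul_one]
  -- the exact exponential integral
  have hexp_int : ∫ x in Set.Ioi wδ, Real.exp (-β * x) = Real.exp (-β * wδ) / β := by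
    have := integral_comp_mul_left_Ioi (fun x => Real.exp (-x)) wδ hβ
    simp only [smul_eq_mul] at this
    have h1 : (∫ x in Set.Ioi wδ, Real.exp (-(β * x))) = β⁻¹ * ∫ x in Set.Ioi (β * wδ), Real.exp (-x) := this
    rw [show (fun x => Real.exp (-β * x)) = fun x => Real.exp (-(β * x)) by ext x; ring_nf]
    rw [h1, integral_exp_neg_Ioi]
    rw [neg_mul]
    ring
  -- integrability of the bound
  have hbint : IntegrableOn (fun W => Pmax * Real.exp (-β * W)) (Set.Ici wδ) := by
    rw [integrableOn_Ici_iff_integrableOn_Ioi]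
    exact (exp_neg_integrableOn_Ioi wδ hβ).const_mul Pmax
  -- bound the integral
  have hmono : ∫ W in Set.Ici wδ, Pfwd W * Real.exp (-β * W)
      ≤ ∫ W in Set.Ici wδ, Pmax * Real.exp (-β * W) := by
    refine setIntegral_mono_on hint hbint measurableSet_Ici ?_
    intro W _
    exact mul_le_mul_of_nonneg_right (hPf_bound W) (Real.exp_nonneg _)
  have hval : ∫ W in Set.Ici wδ, Pmax * Real.exp (-β * W) = Pmax * (Real.exp (-β * wδ) / β) := by
    rw [integral_Ici_eq_integral_Ioi, integral_const_mul, hexp_int]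
  have hrw : (1 - δ) = Real.exp (β * ΔF) * ∫ W in Set.Ici wδ, Pfwd W * Real.exp (-β * W) := by
    rw [← hwδ]
    rw [show (fun W => Prev (-W)) = fun W => Pfwd W * Real.exp (-β * W) * Real.exp (β * ΔF) from funext hrev]
    rw [integral_mul_const]
    ring
  have key : 1 - δ ≤ Pmax / β * Real.exp (β * (ΔF - wδ)) := by
    rw [hrw]
    have h2 : Real.exp (β * ΔF) * (∫ W in Set.Ici wδ, Pfwd W * Real.exp (-β * W))
        ≤ Real.exp (β * ΔF) * (Pmax * (Real.exp (-β * wδ) / β)) := by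
      rw [← hval]
      exact mul_le_mul_of_nonneg_left hmono (Real.exp_nonneg _)
    refine h2.trans_eq ?_
    rw [show β * (ΔF - wδ) = β * ΔF + -β * wδ by ring, Real.exp_add]
    field_simp
  have h1δ : 0 < 1 - δ := by linarith
  have hPβ : (0:ℝ) < Pmax / β := div_pos hPmax hβ
  have hlog : Real.log (1 - δ) ≤ Real.log (Pmax / β) + β * (ΔF - wδ) := by
    calc Real.log (1 - δ) ≤ Real.log (Pmax / β * Real.exp (β * (ΔF - wδ))) :=
          Real.log_le_log h1δ key
      _ = Real.log (Pmax / β) + β * (ΔF - wδ) := by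
          rw [Real.log_mul hPβ.ne' (Real.exp_ne_zero _), Real.log_exp]
  have h2 : -Real.log (Pmax / β) + Real.log (1 - δ) ≤ β * (ΔF - wδ) := by linarith
  have h3 : (1 / β) * (-Real.log (Pmax / β) + Real.log (1 - δ)) ≤ ΔF - wδ := by
    have := mul_le_mul_of_nonneg_left h2 (le_of_lt (one_div_pos.mpr hβ))
    calc (1 / β) * (-Real.log (Pmax / β) + Real.log (1 - δ))
        ≤ (1 / β) * (β * (ΔF - wδ)) := this
      _ = ΔF - wδ := by field_simp
  linarith
end

section
/- Lower bound on ε-required work: under Crooks' Theorem, if P_rev(W) ≤ Q_max for all W, then W^ε ≥ ΔF + β^{-1}[−log(Q_max/β) + log(1 - ε)] for any ε ∈ [0,1). -/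
open MeasureTheory Real

/-!
By Crooks' relation and `P_rev ≤ Q_max`, the forward density is dominated by
`Q_max · exp (β (W - ΔF))`. Integrating this envelope up to `W^ε` bounds the mass `1 - ε` by
`(Q_max / β) · exp (β (W^ε - ΔF))`, and taking logarithms gives the claim.
-/

open Set in
lemma setIntegral_Iic_le_of_le_mul_exp {f : ℝ → ℝ} {β C c a : ℝ} (hβ : 0 < β)
    (hf : IntegrableOn f (Iic a)) (hle : ∀ x ∈ Iic a, f x ≤ C * exp (β * (x - c))) :
    ∫ x in Iic a, f x ≤ C / β * exp (β * (a - c)) := by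
  have hsplit : ∀ x, C * exp (β * (x - c)) = C * exp (-(β * c)) * exp (β * x) := fun x => by
    rw [mul_assoc, ← exp_add]; ring_nf
  calc ∫ x in Iic a, f x
      ≤ ∫ x in Iic a, C * exp (-(β * c)) * exp (β * x) := by
        refine setIntegral_mono_on hf ((integrableOn_exp_mul_Iic hβ a).const_mul _)
          measurableSet_Iic fun x hx => ?_
        rw [← hsplit]
        exact hle x hx
    _ = C / β * exp (β * (a - c)) := by
        rw [integral_const_mul, integral_exp_mul_Iic hβ, div_mul_eq_mul_div, hsplit]
        ring

lemma add_one_div_mul_log_le_of_le_mul_exp {y K β a c : ℝ} (hy : 0 < y) (hK : 0 < K)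
    (hβ : 0 < β) (h : y ≤ K * exp (β * (a - c))) :
    c + 1 / β * (-log K + log y) ≤ a := by
  have hlog : log y ≤ log K + β * (a - c) := by
    simpa only [log_mul hK.ne' (exp_pos _).ne', log_exp] using log_le_log hy h
  calc c + 1 / β * (-log K + log y)
      ≤ c + 1 / β * (β * (a - c)) := by gcongr; linarith
    _ = a := by field_simp; ring

theorem eps_required_work_lower_bound_general
    (β ΔF ε Qmax : ℝ) (hβ : 0 < β) (hε1 : ε < 1) (hQmax : 0 < Qmax)
    (Pfwd Prev : ℝ → ℝ)
    (hPr_bound : ∀ W, Prev W ≤ Qmax)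
    (hCrooks : ∀ W, Pfwd W = Prev (-W) * Real.exp (β * (W - ΔF)))
    (Wε : ℝ)
    (hWε : ∫ W in Set.Iic Wε, Pfwd W = 1 - ε)
    (hint' : IntegrableOn Pfwd (Set.Iic Wε)) :
    ΔF + (1 / β) * (-Real.log (Qmax / β) + Real.log (1 - ε)) ≤ Wε := by
  have hPfwd_le : ∀ W ∈ Set.Iic Wε, Pfwd W ≤ Qmax * exp (β * (W - ΔF)) := fun W _ => by
    rw [hCrooks W]
    exact mul_le_mul_of_nonneg_right (hPr_bound _) (exp_pos _).le
  have hmass : 1 - ε ≤ Qmax / β * exp (β * (Wε - ΔF)) :=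
    hWε ▸ setIntegral_Iic_le_of_le_mul_exp hβ hint' hPfwd_le
  exact add_one_div_mul_log_le_of_le_mul_exp (by linarith) (by positivity) hβ hmass

theorem eps_required_work_lower_bound
    (β ΔF ε Qmax : ℝ) (hβ : 0 < β) (hε0 : 0 ≤ ε) (hε1 : ε < 1) (hQmax : 0 < Qmax)
    (Pfwd Prev : ℝ → ℝ)
    (hPf_nonneg : ∀ W, 0 ≤ Pfwd W) (hPr_nonneg : ∀ W, 0 ≤ Prev W)
    (hPf_norm : ∫ W, Pfwd W = 1) (hPr_norm : ∫ W, Prev W = 1)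
    (hPr_bound : ∀ W, Prev W ≤ Qmax)
    (hCrooks : ∀ W, Pfwd W = Prev (-W) * Real.exp (β * (W - ΔF)))
    (Wε : ℝ)
    (hWε : ∫ W in Set.Iic Wε, Pfwd W = 1 - ε)
    (hint : IntegrableOn (fun W => Prev W * Real.exp (-β * W)) (Set.Ici (-Wε)))
    (hint' : IntegrableOn Pfwd (Set.Iic Wε)) :
    ΔF + (1 / β) * (-Real.log (Qmax / β) + Real.log (1 - ε)) ≤ Wε :=
  eps_required_work_lower_bound_general β ΔF ε Qmax hβ hε1 hQmax Pfwd Prev hPr_bound hCrooks Wε hWε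
    hint'
end

section
/- Quantum one-shot Jarzynski equality: for a discrete quantum protocol where work is defined via two projective energy measurements bracketing unitary evolution U, with initial Gibbs populations p_n(τ) = exp(-β E_n(τ))/Z_τ and reversal symmetry p_rev(m|n) = p_fwd(n|m), the truncated characteristic function satisfies χ^ε_rev(β) = Σ_{m,n} p_fwd(n|m) p_n(τ) exp(-β(E_m(-τ) - E_n(τ))) Θ(W^ε - E_n(τ) + E_m(-τ)) = (1-ε) exp(β ΔF), where 1-ε = Σ_{m,n} p_m(-τ) p_fwd(n|m) Θ(W^ε - E_n(τ) + E_m(-τ)) and exp(β ΔF) = Z_{-τ}/Z_τ. -/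
open Real

theorem quantum_one_shot_jarzynski
    {ιm ιn : Type*} [Fintype ιm] [Fintype ιn]
    (β : ℝ) (hβ : 0 < β)
    (Em : ιm → ℝ) (En : ιn → ℝ)
    (Zm Zn : ℝ)
    (hZm : Zm = ∑ m, Real.exp (-β * Em m))
    (hZn : Zn = ∑ n, Real.exp (-β * En n))
    (pfwd : ιm → ιn → ℝ) (prev : ιn → ιm → ℝ)
    (hpfwd_nonneg : ∀ m n, 0 ≤ pfwd m n)
    (hpfwd_row : ∀ m, ∑ n, pfwd m n = 1)
    (hpfwd_col : ∀ n, ∑ m, pfwd m n = 1)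
    (hrev : ∀ m n, prev n m = pfwd m n)
    (Wε ε ΔF : ℝ)
    (Θ : ℝ → ℝ) (hΘ : ∀ x, Θ x = if 0 ≤ x then 1 else 0)
    (hε : ∑ m, ∑ n, (Real.exp (-β * Em m) / Zm) * pfwd m n *
        Θ (Wε - (En n - Em m)) = 1 - ε)
    (hΔF : Real.exp (β * ΔF) = Zm / Zn) :
    ∑ m, ∑ n, prev n m * (Real.exp (-β * En n) / Zn) *
        Real.exp (-β * (Em m - En n)) * Θ (Wε - En n + Em m)
      = (1 - ε) * Real.exp (β * ΔF) := by
  rcases isEmpty_or_nonempty ιm with hm | hm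
  · have h0 : (1 : ℝ) - ε = 0 := by
      rw [← hε]; simp
    simp [h0]
  · have hZmpos : 0 < Zm := by
      rw [hZm]
      exact Finset.sum_pos (fun i _ => Real.exp_pos _) Finset.univ_nonempty
    rw [hΔF, ← hε, Finset.sum_mul]
    refine Finset.sum_congr rfl fun m _ => ?_
    rw [Finset.sum_mul]
    refine Finset.sum_congr rfl fun n _ => ?_
    rw [hrev]
    have h1 : Wε - En n + Em m = Wε - (En n - Em m) := by ring
    rw [h1]
    have he : Real.exp (-β * En n) * Real.exp (-β * (Em m - En n))
        = Real.exp (-β * Em m) := by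
      rw [← Real.exp_add]; congr 1; ring
    field_simp [hZmpos.ne']
    simp only [neg_mul] at he ⊢
    linear_combination pfwd m n * Θ (Wε - (En n - Em m)) * Zn⁻¹ * he
end
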